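/- arXiv:2604.08018 — 7 statements merged into one kernel-verified Lean document; each statement's English description precedes it below -/
import Mathlib

section
/- For a discrete-time LTI system (A,B,C,D), the following two conditions are equivalent: (i) there exists z ∈ ℂ such that the Rosenbrock matrix [A − zI, B; C, D] ∈ ℂ^{(n+p)×(n+m)} has rank n + m; (ii) there exist a natural number L ≤ n and a matrix P ∈ ℝ^{m×(L+1)p} such that P · I_L = [I_m, 0], where [I_m, 0] ∈ ℝ^{m×(L+1)m}. -/
/-!
Both conditions are compared with left invertibility with delay `L`: every input whose
zero-state output vanishes at times `0, …, L` has `u₀ = 0`. By duality this is exactly the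
solvability of `P I_L = [I_m, 0]`.

Suppose the Rosenbrock matrix is injective at `z`. The spaces `V_k` of states from which the
output can be kept zero for `k` steps decrease, so `V_{k+1} = V_k` for some `k ≤ n`. An input with
`u₀ ≠ 0` and zero output up to time `n` has `D u₀ = 0` and `B u₀ ∈ V_n ⊆ V_k`. Then the pairs
`(x, u)` with `C x + D u = 0` and `A x + B u ∈ V_k` project onto `V_k` with the nonzero element
`(0, u₀)` in the kernel. So `(x, u) ↦ A x + B u - z x`, which maps them into `V_k`, has a nonzero
kernel vector: a kernel vector of the Rosenbrock matrix at `z`.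

Conversely, if the Rosenbrock matrix is singular at every `z`, then `[X A - 1, X B; C, D]` is
singular at every real `t ≠ 0`. Its Gram determinant therefore vanishes identically, which gives a
polynomial kernel vector. Its coefficients are a nonzero input with zero output for all time, and
shifting it to its first nonzero value contradicts left invertibility.
-/

open Matrix

/-- Block invertibility (Toeplitz) matrix `I_L` of the LTI system `(A,B,C,D)`:
block `(j,i)` equals `D` if `j = i`, `C A^(j-i-1) B` if `i < j`, and `0` otherwise. -/
noncomputable def invMat {n m p : ℕ} (A : Matrix (Fin n) (Fin n) ℝ)
    (B : Matrix (Fin n) (Fin m) ℝ) (C : Matrix (Fin p) (Fin n) ℝ)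
    (D : Matrix (Fin p) (Fin m) ℝ) (L : ℕ) :
    Matrix (Fin (L + 1) × Fin p) (Fin (L + 1) × Fin m) ℝ :=
  fun jr ic =>
    if (jr.1 : ℕ) = (ic.1 : ℕ) then D jr.2 ic.2
    else if (ic.1 : ℕ) < (jr.1 : ℕ) then
      (C * A ^ ((jr.1 : ℕ) - (ic.1 : ℕ) - 1) * B) jr.2 ic.2
    else 0

/-- The block matrix `[I_m, 0] ∈ ℝ^{m × (L+1)m}`. -/
noncomputable def idZero (m L : ℕ) : Matrix (Fin m) (Fin (L + 1) × Fin m) ℝ :=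
  fun r ic => if (ic.1 : ℕ) = 0 ∧ r = ic.2 then 1 else 0

/-- The Rosenbrock matrix `[A - zI, B; C, D] ∈ ℂ^{(n+p) × (n+m)}`. -/
noncomputable def rosenbrock {n m p : ℕ} (A : Matrix (Fin n) (Fin n) ℝ)
    (B : Matrix (Fin n) (Fin m) ℝ) (C : Matrix (Fin p) (Fin n) ℝ)
    (D : Matrix (Fin p) (Fin m) ℝ) (z : ℂ) :
    Matrix (Fin n ⊕ Fin p) (Fin n ⊕ Fin m) ℂ :=
  Matrix.fromBlocks (A.map Complex.ofReal - z • 1) (B.map Complex.ofReal)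
    (C.map Complex.ofReal) (D.map Complex.ofReal)

theorem Matrix.exists_mul_eq_of_mulVec_eq_zero {𝕜 ι κ ρ : Type*} [Field 𝕜] [Fintype ι]
    [Fintype κ] [Fintype ρ] [DecidableEq ι] [DecidableEq κ] (M : Matrix ι κ 𝕜) (E : Matrix ρ κ 𝕜)
    (h : ∀ v, M *ᵥ v = 0 → E *ᵥ v = 0) : ∃ P : Matrix ρ ι 𝕜, P * M = E := by
  have hker : LinearMap.ker M.mulVecLin ≤ LinearMap.ker E.mulVecLin := fun v hv => h v hv
  obtain ⟨g, hg⟩ := LinearMap.exists_extend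
    ((LinearMap.ker M.mulVecLin).liftQ E.mulVecLin hker ∘ₗ
      M.mulVecLin.quotKerEquivRange.symm.toLinearMap)
  refine ⟨LinearMap.toMatrix' g, Matrix.toLin'.injective (LinearMap.ext fun v => ?_)⟩
  have := LinearMap.congr_fun hg ⟨M.mulVecLin v, LinearMap.mem_range_self _ v⟩
  simp only [LinearMap.comp_apply, LinearEquiv.coe_coe,
    LinearMap.quotKerEquivRange_symm_apply_image] at this
  simpa [Matrix.toLin'_mul] using this

theorem Matrix.rank_eq_card_width_iff {𝕜 ι κ : Type*} [Field 𝕜] [Fintype ι] [Fintype κ]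
    (M : Matrix ι κ 𝕜) : M.rank = Fintype.card κ ↔ ∀ v, M *ᵥ v = 0 → v = 0 := by
  rw [← Matrix.ker_mulVecLin_eq_bot_iff, ← Submodule.finrank_eq_zero, Matrix.rank,
    ← Module.finrank_fintype_fun_eq_card (R := 𝕜), ← M.mulVecLin.finrank_range_add_finrank_ker]
  omega

theorem Matrix.exists_mulVec_eq_zero_of_map_ofReal {ι κ : Type*} [Fintype κ]
    (M : Matrix ι κ ℝ) {v : κ → ℂ} (hv : v ≠ 0) (hMv : M.map Complex.ofReal *ᵥ v = 0) :
    ∃ w ≠ 0, M *ᵥ w = 0 := by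
  have hre : M *ᵥ (fun j => (v j).re) = 0 := funext fun i => by
    simpa [mulVec, dotProduct, Complex.re_sum] using congrArg Complex.re (congrFun hMv i)
  have him : M *ᵥ (fun j => (v j).im) = 0 := funext fun i => by
    simpa [mulVec, dotProduct, Complex.im_sum] using congrArg Complex.im (congrFun hMv i)
  by_cases h : (fun j => (v j).re) = 0
  · refine ⟨fun j => (v j).im, fun h' => hv (funext fun j => Complex.ext ?_ ?_), him⟩
    · exact congrFun h j
    · exact congrFun h' j
  · exact ⟨_, h, hre⟩

theorem Matrix.exists_mulVec_eq_zero_of_infinite_eval {ι κ : Type*} [Fintype ι] [Fintype κ]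
    [DecidableEq κ] (M : Matrix ι κ (Polynomial ℝ))
    (h : {t : ℝ | ∃ v ≠ 0, M.map (Polynomial.eval t) *ᵥ v = 0}.Infinite) :
    ∃ w ≠ 0, M *ᵥ w = 0 := by
  have hdet : (Mᵀ * M).det = 0 := by
    refine Polynomial.eq_zero_of_infinite_isRoot _ (h.mono ?_)
    rintro t ⟨v, hv, hMv⟩
    have hmap : (Mᵀ * M).map (Polynomial.eval t) =
        (M.map (Polynomial.eval t))ᵀ * M.map (Polynomial.eval t) := by
      rw [← Polynomial.coe_evalRingHom, Matrix.map_mul, Matrix.transpose_map]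
    rw [Set.mem_ofPred_eq, Polynomial.IsRoot.def, ← Polynomial.coe_evalRingHom, RingHom.map_det,
      RingHom.mapMatrix_apply, Polynomial.coe_evalRingHom, hmap]
    exact Matrix.exists_mulVec_eq_zero_iff.mp ⟨v, hv, by rw [← mulVec_mulVec, hMv, mulVec_zero]⟩
  obtain ⟨w, hw, hMw⟩ := Matrix.exists_mulVec_eq_zero_iff.mpr hdet
  refine ⟨w, hw, funext fun i => Polynomial.funext fun t => ?_⟩
  have hsq : (M *ᵥ w) ⬝ᵥ (M *ᵥ w) = 0 := by
    rw [dotProduct_mulVec, ← mulVec_transpose, mulVec_mulVec, hMw, zero_dotProduct]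
  have heval : (fun i => (M *ᵥ w) i |>.eval t) ⬝ᵥ (fun i => (M *ᵥ w) i |>.eval t) = 0 := by
    simpa [dotProduct, Polynomial.eval_finsetSum] using congrArg (Polynomial.eval t) hsq
  simpa using congrFun (dotProduct_self_eq_zero.mp heval) i

theorem Submodule.exists_succ_eq_of_antitone {𝕜 E : Type*} [Field 𝕜] [AddCommGroup E]
    [Module 𝕜 E] [FiniteDimensional 𝕜 E] {V : ℕ → Submodule 𝕜 E} (hV : Antitone V) :
    ∃ k ≤ Module.finrank 𝕜 E, V (k + 1) = V k := by
  by_contra! hne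
  have hdrop : ∀ k ≤ Module.finrank 𝕜 E + 1, Module.finrank 𝕜 (V k) + k ≤ Module.finrank 𝕜 E := by
    intro k hk
    induction k with
    | zero => simpa using Submodule.finrank_le (V 0)
    | succ k ih =>
      have hlt := Submodule.finrank_lt_finrank_of_lt
        (lt_of_le_of_ne (hV (Nat.le_add_right k 1)) (hne k (by omega)))
      have := ih (by omega)
      omega
  have := hdrop _ le_rfl
  omega

theorem Polynomial.coeff_map_C_mulVec {R α β : Type*} [CommRing R] [Fintype β] (M : Matrix α β R)
    (p : β → Polynomial R) (k : ℕ) (i : α) :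
    ((M.map Polynomial.C *ᵥ p) i).coeff k = (M *ᵥ fun j => (p j).coeff k) i := by
  simp [mulVec, dotProduct]

namespace LTI

section Trajectory

variable {R : Type*} [CommRing R] {ι κ ρ : Type*} [Fintype ι] [Fintype κ]
  (A : Matrix ι ι R) (B : Matrix ι κ R) (C : Matrix ρ ι R) (D : Matrix ρ κ R)

def state (u : ℕ → κ → R) : ℕ → ι → R
  | 0 => 0
  | k + 1 => A *ᵥ state u k + B *ᵥ u k

def output (u : ℕ → κ → R) (k : ℕ) : ρ → R :=
  C *ᵥ state A B u k + D *ᵥ u k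

def IsLeftInvertibleWithDelay (L : ℕ) : Prop :=
  ∀ u : ℕ → κ → R, (∀ j ≤ L, output A B C D u j = 0) → u 0 = 0

variable {A B C D}

theorem state_eq_sum [DecidableEq ι] (u : ℕ → κ → R) (k : ℕ) :
    state A B u k = ∑ i ∈ Finset.range k, (A ^ (k - i - 1) * B) *ᵥ u i := by
  induction k with
  | zero => rfl
  | succ k ih =>
    rw [state, ih, mulVec_sum, Finset.sum_range_succ, Nat.add_sub_cancel_left, Nat.sub_self,
      pow_zero, Matrix.one_mul]
    congr 1
    refine Finset.sum_congr rfl fun i hi => ?_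
    have hi : k + 1 - i - 1 = k - i - 1 + 1 := by have := Finset.mem_range.mp hi; omega
    rw [mulVec_mulVec, ← Matrix.mul_assoc, ← pow_succ', hi]

theorem state_map {S : Type*} [CommRing S] (f : R →+* S) (u : ℕ → κ → R) (k : ℕ) :
    state (A.map f) (B.map f) (fun k => f ∘ u k) k = f ∘ state A B u k := by
  induction k with
  | zero => funext i; simp [state]
  | succ k ih =>
    funext i
    simp [state, ih, RingHom.map_mulVec]

theorem output_map {S : Type*} [CommRing S] (f : R →+* S) (u : ℕ → κ → R) (k : ℕ) :
    output (A.map f) (B.map f) (C.map f) (D.map f) (fun k => f ∘ u k) k =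
      f ∘ output A B C D u k := by
  funext i
  simp [output, state_map, RingHom.map_mulVec]

theorem state_eq_zero_of_forall_lt {u : ℕ → κ → R} {k : ℕ} (hu : ∀ i < k, u i = 0) :
    state A B u k = 0 := by
  induction k with
  | zero => rfl
  | succ k ih =>
    rw [state, ih fun i hi => hu i (by omega), hu k k.lt_succ_self, mulVec_zero, mulVec_zero,
      add_zero]

theorem state_shift {u : ℕ → κ → R} {k : ℕ} (hk : state A B u k = 0) (i : ℕ) :
    state A B (fun i => u (k + i)) i = state A B u (k + i) := by
  induction i with
  | zero => exact hk.symm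
  | succ i ih => rw [state, ih]; rfl

theorem not_isLeftInvertibleWithDelay_of_output_eq_zero {u : ℕ → κ → R} (hu : u ≠ 0)
    (hy : ∀ k, output A B C D u k = 0) (L : ℕ) : ¬ IsLeftInvertibleWithDelay A B C D L := by
  classical
  have hex : ∃ k, u k ≠ 0 := Function.ne_iff.mp hu
  set k := Nat.find hex
  have hk : state A B u k = 0 :=
    state_eq_zero_of_forall_lt fun i hi => not_not.mp (Nat.find_min hex hi)
  intro h
  refine Nat.find_spec hex (h (fun i => u (k + i)) fun j _ => ?_)
  rw [output, state_shift hk]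
  exact hy (k + j)

theorem IsLeftInvertibleWithDelay.of_map {S : Type*} [CommRing S] {f : R →+* S}
    (hf : Function.Injective f) {L : ℕ}
    (h : IsLeftInvertibleWithDelay (A.map f) (B.map f) (C.map f) (D.map f) L) :
    IsLeftInvertibleWithDelay A B C D L := by
  intro u hy
  have := h (fun k => f ∘ u k) fun j hj => by rw [output_map, hy j hj]; funext; simp
  exact funext fun c => hf (by simpa using congrFun this c)

end Trajectory

section Toeplitz

variable {n m p : ℕ} {A : Matrix (Fin n) (Fin n) ℝ} {B : Matrix (Fin n) (Fin m) ℝ}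
  {C : Matrix (Fin p) (Fin n) ℝ} {D : Matrix (Fin p) (Fin m) ℝ}

theorem invMat_mulVec (L : ℕ) (u : ℕ → Fin m → ℝ) (j : Fin (L + 1)) (s : Fin p) :
    (invMat A B C D L *ᵥ fun ic => u ic.1 ic.2) (j, s) = output A B C D u j s := by
  have hblock : ∀ i : Fin (L + 1), ∑ c, invMat A B C D L (j, s) (i, c) * u i c =
      (if (i : ℕ) = j then (D *ᵥ u i) s else 0) +
        if (i : ℕ) < j then ((C * A ^ ((j : ℕ) - i - 1) * B) *ᵥ u i) s else 0 := by
    intro i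
    simp only [invMat]
    split_ifs <;> first | omega | simp [mulVec, dotProduct]
  have hlt : (Finset.range (L + 1)).filter (· < (j : ℕ)) = Finset.range j := by
    ext i; simp; omega
  rw [mulVec, dotProduct, Fintype.sum_prod_type, Finset.sum_congr rfl fun i _ => hblock i,
    Fin.sum_univ_eq_sum_range (fun i => (if i = (j : ℕ) then (D *ᵥ u i) s else 0) +
        if i < j then ((C * A ^ ((j : ℕ) - i - 1) * B) *ᵥ u i) s else 0),
    Finset.sum_add_distrib, Finset.sum_ite_eq', if_pos (Finset.mem_range.mpr j.isLt),
    ← Finset.sum_filter, hlt, output, state_eq_sum, mulVec_sum]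
  simp [Finset.sum_apply, mulVec_mulVec, Matrix.mul_assoc, add_comm]

theorem idZero_mulVec {L : ℕ} (U : Fin (L + 1) × Fin m → ℝ) (r : Fin m) :
    (idZero m L *ᵥ U) r = U (0, r) := by
  simp [idZero, mulVec, dotProduct, Fintype.sum_prod_type, Fin.val_eq_zero_iff, Fin.sum_univ_succ,
    Fin.succ_ne_zero]

end Toeplitz

section WeaklyUnobservable

variable {𝕜 : Type*} [Field 𝕜] {ι κ ρ : Type*} [Fintype ι] [Fintype κ]
  (A : Matrix ι ι 𝕜) (B : Matrix ι κ 𝕜) (C : Matrix ρ ι 𝕜) (D : Matrix ρ κ 𝕜)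

def zeroOutputPairs (V : Submodule 𝕜 (ι → 𝕜)) : Submodule 𝕜 ((ι → 𝕜) × (κ → 𝕜)) :=
  LinearMap.ker (C.mulVecLin.coprod D.mulVecLin) ⊓ V.comap (A.mulVecLin.coprod B.mulVecLin)

/-- The states from which some input keeps the output zero at the next `k` times. -/
def weaklyUnobservable : ℕ → Submodule 𝕜 (ι → 𝕜)
  | 0 => ⊤
  | k + 1 => (zeroOutputPairs A B C D (weaklyUnobservable k)).map (LinearMap.fst 𝕜 _ _)

variable {A B C D}

theorem mem_zeroOutputPairs {V : Submodule 𝕜 (ι → 𝕜)} {w : (ι → 𝕜) × (κ → 𝕜)} :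
    w ∈ zeroOutputPairs A B C D V ↔ C *ᵥ w.1 + D *ᵥ w.2 = 0 ∧ A *ᵥ w.1 + B *ᵥ w.2 ∈ V := by
  simp [zeroOutputPairs]

theorem mem_weaklyUnobservable_succ {k : ℕ} {x : ι → 𝕜} :
    x ∈ weaklyUnobservable A B C D (k + 1) ↔
      ∃ u, C *ᵥ x + D *ᵥ u = 0 ∧ A *ᵥ x + B *ᵥ u ∈ weaklyUnobservable A B C D k := by
  simp [weaklyUnobservable, mem_zeroOutputPairs]

theorem weaklyUnobservable_antitone : Antitone (weaklyUnobservable A B C D) := by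
  refine antitone_nat_of_succ_le fun k => ?_
  induction k with
  | zero => exact le_top
  | succ k ih =>
    intro x hx
    obtain ⟨u, hy, hx⟩ := mem_weaklyUnobservable_succ.mp hx
    exact mem_weaklyUnobservable_succ.mpr ⟨u, hy, ih hx⟩

theorem state_mem_weaklyUnobservable {u : ℕ → κ → 𝕜} {i d : ℕ}
    (hy : ∀ j, i ≤ j → j < i + d → output A B C D u j = 0) :
    state A B u i ∈ weaklyUnobservable A B C D d := by
  induction d generalizing i with
  | zero => exact Submodule.mem_top
  | succ d ih =>
    exact mem_weaklyUnobservable_succ.mpr ⟨u i, hy i le_rfl (by omega),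
      ih (i := i + 1) fun j hij hj => hy j (by omega) (by omega)⟩

theorem exists_rosenbrock_mulVec_eq_zero [DecidableEq ι] {V : Submodule 𝕜 (ι → 𝕜)}
    (hV : (zeroOutputPairs A B C D V).map (LinearMap.fst 𝕜 _ _) = V) {u₀ : κ → 𝕜}
    (hu₀ : u₀ ≠ 0) (hD : D *ᵥ u₀ = 0) (hB : B *ᵥ u₀ ∈ V) (z : 𝕜) :
    ∃ w ≠ 0, fromBlocks (A - z • 1) B C D *ᵥ w = 0 := by
  set S := zeroOutputPairs A B C D V
  have hfst : ∀ w ∈ S, w.1 ∈ V := fun w hw => hV ▸ Submodule.mem_map_of_mem hw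
  let π : S →ₗ[𝕜] (ι → 𝕜) := LinearMap.fst 𝕜 _ _ ∘ₗ S.subtype
  have hπ : LinearMap.range π = V := by
    rw [LinearMap.range_comp, Submodule.range_subtype, hV]
  have hker : LinearMap.ker π ≠ ⊥ := by
    have hmem : ((0, u₀) : (ι → 𝕜) × (κ → 𝕜)) ∈ S :=
      mem_zeroOutputPairs.mpr ⟨by simpa using hD, by simpa using hB⟩
    refine (Submodule.ne_bot_iff _).mpr ⟨⟨_, hmem⟩, rfl, fun h => hu₀ ?_⟩
    simpa using congrArg (fun w : S => (w : (ι → 𝕜) × (κ → 𝕜)).2) h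
  have hlt : Module.finrank 𝕜 V < Module.finrank 𝕜 S := by
    have := π.finrank_range_add_finrank_ker
    have := Submodule.one_le_finrank_iff.mpr hker
    rw [hπ] at *
    omega
  let Ψ : S →ₗ[𝕜] V := LinearMap.codRestrict V
    ((A.mulVecLin.coprod B.mulVecLin - z • LinearMap.fst 𝕜 _ _) ∘ₗ S.subtype)
    fun w => V.sub_mem (mem_zeroOutputPairs.mp w.2).2 (V.smul_mem z (hfst w w.2))
  obtain ⟨⟨⟨x, u⟩, hS⟩, hΨ, hne⟩ :=
    (Submodule.ne_bot_iff _).mp (LinearMap.ker_ne_bot_of_finrank_lt (f := Ψ) hlt)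
  refine ⟨Sum.elim x u, fun h => hne (Subtype.ext (Prod.ext (funext fun i => congrFun h (.inl i))
    (funext fun c => congrFun h (.inr c)))), ?_⟩
  have hΨ : A *ᵥ x + B *ᵥ u - z • x = 0 := congrArg Subtype.val (LinearMap.mem_ker.mp hΨ)
  have hy := (mem_zeroOutputPairs.mp hS).1
  rw [fromBlocks_mulVec]
  ext (i | i)
  · simpa [sub_mulVec, smul_mulVec, add_sub_right_comm] using congrFun hΨ i
  · simpa using congrFun hy i

theorem isLeftInvertibleWithDelay_card_of_injective [DecidableEq ι] {z : 𝕜}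
    (hR : ∀ w, fromBlocks (A - z • 1) B C D *ᵥ w = 0 → w = 0) :
    IsLeftInvertibleWithDelay A B C D (Fintype.card ι) := by
  intro u hy
  by_contra hu
  obtain ⟨k, hk, hfix⟩ := Submodule.exists_succ_eq_of_antitone
    (weaklyUnobservable_antitone (A := A) (B := B) (C := C) (D := D))
  rw [Module.finrank_fintype_fun_eq_card] at hk
  have hB : B *ᵥ u 0 ∈ weaklyUnobservable A B C D k := by
    refine weaklyUnobservable_antitone hk ?_
    simpa [state] using state_mem_weaklyUnobservable (i := 1) (d := Fintype.card ι)
      fun j _ hj => hy j (by omega)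
  have hD : D *ᵥ u 0 = 0 := by simpa [output, state] using hy 0 (Nat.zero_le _)
  obtain ⟨w, hw, hRw⟩ := exists_rosenbrock_mulVec_eq_zero hfix hu hD hB z
  exact hw (hR w hRw)

end WeaklyUnobservable

section Reversed

variable {R : Type*} [CommRing R] {ι κ ρ : Type*} [DecidableEq ι]
  (A : Matrix ι ι R) (B : Matrix ι κ R) (C : Matrix ρ ι R) (D : Matrix ρ κ R)

/-- `X` multiplies `A` and `B` rather than the identity so that polynomial kernel vectors are
generating functions of zero-output trajectories. -/
noncomputable def reversedRosenbrock : Matrix (ι ⊕ ρ) (ι ⊕ κ) (Polynomial R) :=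
  fromBlocks ((Polynomial.X : Polynomial R) • A.map Polynomial.C - 1)
    ((Polynomial.X : Polynomial R) • B.map Polynomial.C)
    (C.map Polynomial.C) (D.map Polynomial.C)

variable {A B C D}

theorem reversedRosenbrock_map_eval (t : R) :
    (reversedRosenbrock A B C D).map (Polynomial.eval t) = fromBlocks (t • A - 1) (t • B) C D := by
  ext (i | i) (j | j) <;>
    simp [reversedRosenbrock, one_apply, apply_ite (Polynomial.eval t)] <;> ring

theorem reversedRosenbrock_eval_mulVec_eq_zero [Fintype ι] [Fintype κ] {K : Type*} [Field K]
    {A : Matrix ι ι K} {B : Matrix ι κ K} {C : Matrix ρ ι K} {D : Matrix ρ κ K} {t : K} (ht : t ≠ 0)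
    {v : ι ⊕ κ → K} (hv : fromBlocks (A - t⁻¹ • 1) B C D *ᵥ v = 0) :
    (reversedRosenbrock A B C D).map (Polynomial.eval t) *ᵥ v = 0 := by
  rw [fromBlocks_mulVec] at hv
  rw [reversedRosenbrock_map_eval, fromBlocks_mulVec]
  ext (i | i)
  · have := congrFun hv (.inl i)
    simp [sub_mulVec, smul_mulVec] at this ⊢
    linear_combination t * this + (mul_inv_cancel₀ ht) * v (.inl i)
  · simpa using congrFun hv (.inr i)

theorem coeff_eq_state [Fintype ι] [Fintype κ] {w : ι ⊕ κ → Polynomial R}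
    (hw : reversedRosenbrock A B C D *ᵥ w = 0) (k : ℕ) :
    (fun i => (w (.inl i)).coeff k) = state A B (fun k c => (w (.inr c)).coeff k) k := by
  have hrow : ∀ i, ((Polynomial.X : Polynomial R) * (A.map Polynomial.C *ᵥ (w ∘ .inl) +
      B.map Polynomial.C *ᵥ (w ∘ .inr)) i - w (.inl i)) = 0 := by
    intro i
    have := congrFun hw (.inl i)
    simp [reversedRosenbrock, fromBlocks_mulVec, sub_mulVec, smul_mulVec] at this
    rw [Pi.add_apply, mul_add]
    linear_combination this
  induction k with
  | zero =>
    funext i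
    simpa [state] using congrArg (Polynomial.coeff · 0) (hrow i)
  | succ k ih =>
    funext i
    have := congrArg (Polynomial.coeff · (k + 1)) (hrow i)
    simp [Polynomial.coeff_X_mul, Polynomial.coeff_map_C_mulVec] at this
    rw [state, ← ih, Pi.add_apply]
    linear_combination -this

theorem output_coeff_eq_zero [Fintype ι] [Fintype κ] {w : ι ⊕ κ → Polynomial R}
    (hw : reversedRosenbrock A B C D *ᵥ w = 0) (k : ℕ) :
    output A B C D (fun k c => (w (.inr c)).coeff k) k = 0 := by
  rw [output, ← coeff_eq_state hw]
  funext s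
  have := congrArg (Polynomial.coeff · k) (congrFun hw (.inr s))
  simpa [reversedRosenbrock, fromBlocks_mulVec, Polynomial.coeff_map_C_mulVec] using this

end Reversed

section RealSystem

variable {n m p : ℕ} {A : Matrix (Fin n) (Fin n) ℝ} {B : Matrix (Fin n) (Fin m) ℝ}
  {C : Matrix (Fin p) (Fin n) ℝ} {D : Matrix (Fin p) (Fin m) ℝ}

theorem exists_mul_invMat_eq_idZero_iff {L : ℕ} :
    (∃ P : Matrix (Fin m) (Fin (L + 1) × Fin p) ℝ, P * invMat A B C D L = idZero m L) ↔
      IsLeftInvertibleWithDelay A B C D L := by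
  constructor
  · rintro ⟨P, hP⟩ u hy
    have hI : invMat A B C D L *ᵥ (fun ic => u ic.1 ic.2) = 0 := by
      funext ⟨j, s⟩
      rw [invMat_mulVec, hy j (Nat.lt_succ_iff.mp j.isLt)]
      rfl
    have hZ : idZero m L *ᵥ (fun ic => u ic.1 ic.2) = 0 := by
      rw [← hP, ← mulVec_mulVec, hI, mulVec_zero]
    funext r
    simpa [idZero_mulVec] using congrFun hZ r
  · intro h
    refine Matrix.exists_mul_eq_of_mulVec_eq_zero _ _ fun U hU => ?_
    let u : ℕ → Fin m → ℝ := fun k c => if hk : k < L + 1 then U (⟨k, hk⟩, c) else 0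
    have hUu : U = fun ic => u ic.1 ic.2 := by
      funext ⟨i, c⟩
      simp only [u, dif_pos i.isLt, Fin.eta]
    have hy : ∀ j ≤ L, output A B C D u j = 0 := by
      intro j hj
      funext s
      have hrow : (invMat A B C D L *ᵥ U) (⟨j, by omega⟩, s) = output A B C D u j s := by
        rw [hUu, invMat_mulVec]
      rw [← hrow, hU]
      rfl
    have hu := h u hy
    funext r
    simpa [idZero_mulVec, u] using congrFun hu r

theorem rosenbrock_ofReal (r : ℝ) :
    rosenbrock A B C D r = (fromBlocks (A - r • 1) B C D).map Complex.ofReal := by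
  ext (i | i) (j | j) <;> simp [rosenbrock, one_apply, apply_ite Complex.ofReal]

theorem rosenbrock_rank_eq_iff (z : ℂ) : (rosenbrock A B C D z).rank = n + m ↔
    ∀ v, rosenbrock A B C D z *ᵥ v = 0 → v = 0 := by
  rw [← Matrix.rank_eq_card_width_iff, Fintype.card_sum, Fintype.card_fin, Fintype.card_fin]

theorem IsLeftInvertibleWithDelay.exists_rosenbrock_rank_eq {L : ℕ}
    (h : IsLeftInvertibleWithDelay A B C D L) :
    ∃ z : ℂ, (rosenbrock A B C D z).rank = n + m := by
  by_contra! hz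
  have hsing : ∀ t : ℝ, t ≠ 0 →
      ∃ v ≠ 0, (reversedRosenbrock A B C D).map (Polynomial.eval t) *ᵥ v = 0 := by
    intro t ht
    obtain ⟨v, hRv, hv⟩ : ∃ v, rosenbrock A B C D (t⁻¹ : ℝ) *ᵥ v = 0 ∧ v ≠ 0 := by
      by_contra! hinj
      exact hz _ ((rosenbrock_rank_eq_iff _).mpr hinj)
    rw [rosenbrock_ofReal] at hRv
    obtain ⟨v', hv', hRv'⟩ := Matrix.exists_mulVec_eq_zero_of_map_ofReal _ hv hRv
    exact ⟨v', hv', reversedRosenbrock_eval_mulVec_eq_zero ht hRv'⟩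
  obtain ⟨w, hw, hRw⟩ := Matrix.exists_mulVec_eq_zero_of_infinite_eval _
    ((Set.finite_singleton 0).infinite_compl.mono hsing)
  refine not_isLeftInvertibleWithDelay_of_output_eq_zero
    (u := fun k c => (w (.inr c)).coeff k) (fun hu => hw ?_) (output_coeff_eq_zero hRw) L h
  have hx : ∀ k, (fun i => (w (.inl i)).coeff k) = 0 := fun k => by
    rw [coeff_eq_state hRw, hu]
    exact state_eq_zero_of_forall_lt fun _ _ => rfl
  funext x
  rcases x with i | c <;> ext k
  · simpa using congrFun (hx k) i
  · simpa using congrFun (congrFun hu k) c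

end RealSystem

end LTI

/-- Existence of an `L`-delay left inverse: (i) there exists `z ∈ ℂ` where the Rosenbrock
matrix has rank `n + m` iff (ii) there exist `L ≤ n` and `P` with `P ⬝ I_L = [I_m, 0]`. -/
theorem rosenbrock_full_rank_iff_exists_left_inverse {n m p : ℕ}
    (A : Matrix (Fin n) (Fin n) ℝ) (B : Matrix (Fin n) (Fin m) ℝ)
    (C : Matrix (Fin p) (Fin n) ℝ) (D : Matrix (Fin p) (Fin m) ℝ) :
    (∃ z : ℂ, (rosenbrock A B C D z).rank = n + m) ↔
    (∃ L : ℕ, L ≤ n ∧ ∃ P : Matrix (Fin m) (Fin (L + 1) × Fin p) ℝ,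
      P * invMat A B C D L = idZero m L) := by
  constructor
  · rintro ⟨z, hz⟩
    have h := (LTI.isLeftInvertibleWithDelay_card_of_injective
      ((LTI.rosenbrock_rank_eq_iff z).mp hz)).of_map (f := Complex.ofRealHom)
      Complex.ofReal_injective
    rw [Fintype.card_fin] at h
    exact ⟨n, le_rfl, LTI.exists_mul_invMat_eq_idZero_iff.mpr h⟩
  · rintro ⟨L, -, hP⟩
    exact (LTI.exists_mul_invMat_eq_idZero_iff.mp hP).exists_rosenbrock_rank_eq
end

section
/- Suppose rank([O_L, I_L]) = n + rank(I_L) (horizontal concatenation) and there exists P_0 ∈ ℝ^{m×(L+1)p} with P_0 · I_L = [I_m, 0]. Then there exists P ∈ ℝ^{m×(L+1)p} satisfying both P · I_L = [I_m, 0] and P · O_L = 0. -/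
open Matrix

/-- Block observability matrix `O_L` with block rows `C A^k`, `k = 0,…,L`. -/
noncomputable def obsMat {n p : ℕ} (A : Matrix (Fin n) (Fin n) ℝ)
    (C : Matrix (Fin p) (Fin n) ℝ) (L : ℕ) :
    Matrix (Fin (L + 1) × Fin p) (Fin n) ℝ :=
  fun kr j => (C * A ^ (kr.1 : ℕ)) kr.2 j

/-!
The rank condition says that `O_L` is injective and that its column space meets that of `I_L`
only in `0`. Hence, modulo the column space of `I_L`, `O_L` is still injective and has a left
inverse, which gives `M` with `M O_L = 1` and `M I_L = 0`. Then `P = P₀ - P₀ O_L M` keeps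
`P I_L = P₀ I_L` and kills `O_L`.
-/

namespace Matrix

variable {K : Type*} [Field K] {ι κ μ : Type*} [Fintype κ] [Fintype μ]

lemma range_mulVecLin_fromCols (A : Matrix ι κ K) (B : Matrix ι μ K) :
    LinearMap.range (fromCols A B).mulVecLin =
      LinearMap.range A.mulVecLin ⊔ LinearMap.range B.mulVecLin := by
  apply le_antisymm
  · rintro _ ⟨v, rfl⟩
    rw [← Sum.elim_comp_inl_inr v, mulVecLin_apply, fromCols_mulVec_sumElim]
    exact Submodule.add_mem_sup ⟨_, rfl⟩ ⟨_, rfl⟩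
  · refine sup_le ?_ ?_
    · rintro _ ⟨x, rfl⟩
      exact ⟨Sum.elim x 0, by simp⟩
    · rintro _ ⟨y, rfl⟩
      exact ⟨Sum.elim 0 y, by simp⟩

lemma ker_mulVecLin_eq_bot_and_disjoint_of_rank_fromCols [Fintype ι]
    {A : Matrix ι κ K} {B : Matrix ι μ K}
    (h : (fromCols A B).rank = Fintype.card κ + B.rank) :
    LinearMap.ker A.mulVecLin = ⊥ ∧
      Disjoint (LinearMap.range A.mulVecLin) (LinearMap.range B.mulVecLin) := by
  rw [rank, rank, range_mulVecLin_fromCols] at h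
  have hsum := Submodule.finrank_sup_add_finrank_inf_eq
    (LinearMap.range A.mulVecLin) (LinearMap.range B.mulVecLin)
  have hnullity := LinearMap.finrank_range_add_finrank_ker A.mulVecLin
  have hA : Module.finrank K (LinearMap.range A.mulVecLin) ≤ Fintype.card κ :=
    A.rank_le_card_width
  rw [Module.finrank_fintype_fun_eq_card] at hnullity
  constructor
  · exact Submodule.finrank_eq_zero.mp (by omega)
  · rw [disjoint_iff]
    exact Submodule.finrank_eq_zero.mp (by omega)

lemma exists_mul_eq_one_and_mul_eq_zero_of_rank_fromCols [Fintype ι] [DecidableEq κ]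
    {A : Matrix ι κ K} {B : Matrix ι μ K} (h : (fromCols A B).rank = Fintype.card κ + B.rank) :
    ∃ M : Matrix κ ι K, M * A = 1 ∧ M * B = 0 := by
  classical
  obtain ⟨hker, hdisj⟩ := ker_mulVecLin_eq_bot_and_disjoint_of_rank_fromCols h
  set π := (LinearMap.range B.mulVecLin).mkQ
  have hker' : LinearMap.ker (π ∘ₗ A.mulVecLin) = ⊥ := by
    refine LinearMap.ker_eq_bot'.mpr fun x hx => ?_
    have hAx : A *ᵥ x ∈ LinearMap.range B.mulVecLin := (Submodule.Quotient.mk_eq_zero _).mp hx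
    have hAx0 : A *ᵥ x = 0 := (Submodule.disjoint_def.mp hdisj) _ ⟨x, rfl⟩ hAx
    exact (LinearMap.ker_eq_bot'.mp hker) x hAx0
  obtain ⟨g, hg⟩ := (π ∘ₗ A.mulVecLin).exists_leftInverse_of_injective hker'
  have hπB : π ∘ₗ B.mulVecLin = 0 :=
    LinearMap.ext fun y => (Submodule.Quotient.mk_eq_zero _).mpr (LinearMap.mem_range_self _ y)
  refine ⟨LinearMap.toMatrix' (g ∘ₗ π), toLin'.injective ?_, toLin'.injective ?_⟩
  · rw [toLin'_mul, toLin'_toMatrix', toLin'_apply', LinearMap.comp_assoc, hg, toLin'_one]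
  · rw [toLin'_mul, toLin'_toMatrix', toLin'_apply', LinearMap.comp_assoc, hπB,
      LinearMap.comp_zero, map_zero]

end Matrix

/-- If `rank [O_L, I_L] = n + rank I_L` and some `P₀` satisfies `P₀ I_L = [I_m, 0]`,
then there is a `P` with `P I_L = [I_m, 0]` and `P O_L = 0`. -/
theorem exists_left_inverse_annihilating_obs {n m p L : ℕ}
    (A : Matrix (Fin n) (Fin n) ℝ) (B : Matrix (Fin n) (Fin m) ℝ)
    (C : Matrix (Fin p) (Fin n) ℝ) (D : Matrix (Fin p) (Fin m) ℝ)
    (hrank : (Matrix.fromCols (obsMat A C L) (invMat A B C D L)).rank =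
      n + (invMat A B C D L).rank)
    (P₀ : Matrix (Fin m) (Fin (L + 1) × Fin p) ℝ)
    (hP₀ : P₀ * invMat A B C D L = idZero m L) :
    ∃ P : Matrix (Fin m) (Fin (L + 1) × Fin p) ℝ,
      P * invMat A B C D L = idZero m L ∧ P * obsMat A C L = 0 := by
  obtain ⟨M, hMO, hMI⟩ := exists_mul_eq_one_and_mul_eq_zero_of_rank_fromCols
    (by rwa [Fintype.card_fin])
  refine ⟨P₀ - P₀ * obsMat A C L * M, ?_, ?_⟩
  · rw [Matrix.sub_mul, Matrix.mul_assoc (P₀ * _), hMI, Matrix.mul_zero, sub_zero, hP₀]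
  · rw [Matrix.sub_mul, Matrix.mul_assoc (P₀ * _), hMO, Matrix.mul_one, sub_self]
end

section
/- Let Ã ∈ ℝ^{n×n}, C̃ ∈ ℝ^{m×n}, N ≥ 1, and let Õ_{N−1} ∈ ℝ^{Nm×n} be the matrix with block rows C̃ Ã^k for k = 0,…,N−1. Let X̃ ∈ ℝ^{n×s} and let G ∈ ℝ^{s×Nm} satisfy (Õ_{N−1} X̃) G (Õ_{N−1} X̃) = Õ_{N−1} X̃. Assume that for every z ∈ im(X̃), Õ_{N−1} z = 0 implies z = 0. Define M_u := C̃ Ã^N X̃ G ∈ ℝ^{m×Nm} and let R ∈ ℝ^{Nm×Nm} be the block companion matrix whose (i, i+1) blocks equal I_m for i = 1,…,N−1, whose last block row equals M_u, and whose remaining blocks are zero. Then for every v ∈ im(X̃), R (Õ_{N−1} v) = Õ_{N−1} (Ã v). -/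
/-!
Block row `k` of `Õ v` is `C̃ Ãᵏ v`, so the identity blocks of `R` move block `k + 1` of `Õ v`
into position `k`, which is exactly block `k` of `Õ (Ã v)`. Only the last block row uses the
hypotheses: for `v = X̃ c` we need `C̃ Ãᴺ X̃ G Õ X̃ c = C̃ Ãᴺ X̃ c`, and indeed
`X̃ G Õ X̃ c = X̃ c`, since `Õ` maps their difference, which lies in `im X̃`, to zero by the
Moore–Penrose equation.
-/

open Matrix

/-- Block observability-type matrix with block rows `C̃ Ã^k`, `k = 0,…,N-1`. -/
noncomputable def tildeObs {n m : ℕ} (Atil : Matrix (Fin n) (Fin n) ℝ)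
    (Ctil : Matrix (Fin m) (Fin n) ℝ) (N : ℕ) :
    Matrix (Fin N × Fin m) (Fin n) ℝ :=
  fun kr j => (Ctil * Atil ^ (kr.1 : ℕ)) kr.2 j

/-- Block companion matrix: identity blocks on the superdiagonal, last block row `M_u`. -/
noncomputable def blockCompanion {N m : ℕ} (Mu : Matrix (Fin m) (Fin N × Fin m) ℝ) :
    Matrix (Fin N × Fin m) (Fin N × Fin m) ℝ :=
  fun ir jc =>
    if (ir.1 : ℕ) + 1 = N then Mu ir.2 jc
    else if (jc.1 : ℕ) = (ir.1 : ℕ) + 1 ∧ ir.2 = jc.2 then 1 else 0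

theorem mulVec_mulVec_pinv_eq_of_injective {R l n s : Type*} [Ring R] [Fintype l] [Fintype n]
    [Fintype s] {O : Matrix l n R} {X : Matrix n s R} {G : Matrix s l R}
    (hG : O * X * G * (O * X) = O * X) (hinj : ∀ z, O *ᵥ (X *ᵥ z) = 0 → X *ᵥ z = 0)
    (c : s → R) : X *ᵥ (G *ᵥ (O *ᵥ (X *ᵥ c))) = X *ᵥ c := by
  rw [← sub_eq_zero, ← mulVec_sub]
  apply hinj
  have hG' : O * X * G * O * X = O * X := by rw [Matrix.mul_assoc (O * X * G), hG]
  simp only [mulVec_sub, mulVec_mulVec, ← Matrix.mul_assoc, hG', sub_self]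

section BlockCompanion

variable {N m : ℕ} (Mu : Matrix (Fin m) (Fin N × Fin m) ℝ) (x : Fin N × Fin m → ℝ)

theorem blockCompanion_mulVec_apply_of_succ_eq {i : Fin N} (hi : (i : ℕ) + 1 = N) (r : Fin m) :
    (blockCompanion Mu *ᵥ x) (i, r) = (Mu *ᵥ x) r := by
  simp only [mulVec, dotProduct, blockCompanion, hi, if_true]

theorem blockCompanion_mulVec_apply_of_succ_lt {i : Fin N} (hi : (i : ℕ) + 1 < N) (r : Fin m) :
    (blockCompanion Mu *ᵥ x) (i, r) = x (⟨i + 1, hi⟩, r) := by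
  simp only [mulVec, dotProduct, blockCompanion, hi.ne, if_false]
  rw [Fintype.sum_eq_single (⟨i + 1, hi⟩, r)]
  · simp
  · rintro ⟨j, r'⟩ hne
    rw [if_neg fun h => hne (Prod.ext (Fin.ext h.1) h.2.symm), zero_mul]

end BlockCompanion

theorem tildeObs_mulVec_apply {n m N : ℕ} (A : Matrix (Fin n) (Fin n) ℝ)
    (C : Matrix (Fin m) (Fin n) ℝ) (v : Fin n → ℝ) (k : Fin N) (r : Fin m) :
    (tildeObs A C N *ᵥ v) (k, r) = ((C * A ^ (k : ℕ)) *ᵥ v) r := rfl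

theorem blockCompanion_mulVec_tildeObs {n m N : ℕ} {A : Matrix (Fin n) (Fin n) ℝ}
    {C : Matrix (Fin m) (Fin n) ℝ} {Mu : Matrix (Fin m) (Fin N × Fin m) ℝ} {v : Fin n → ℝ}
    (hMu : Mu *ᵥ (tildeObs A C N *ᵥ v) = (C * A ^ N) *ᵥ v) :
    blockCompanion Mu *ᵥ (tildeObs A C N *ᵥ v) = tildeObs A C N *ᵥ (A *ᵥ v) := by
  ext ⟨i, r⟩
  have hshift : (C * A ^ ((i : ℕ) + 1)) *ᵥ v = (C * A ^ (i : ℕ)) *ᵥ (A *ᵥ v) := by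
    rw [mulVec_mulVec, pow_succ, Matrix.mul_assoc]
  rw [tildeObs_mulVec_apply, ← hshift]
  rcases (show (i : ℕ) + 1 ≤ N from i.2).eq_or_lt with hlast | hlt
  · rw [blockCompanion_mulVec_apply_of_succ_eq _ _ hlast, hMu, hlast]
  · rw [blockCompanion_mulVec_apply_of_succ_lt _ _ hlt, tildeObs_mulVec_apply]

theorem blockCompanion_shifts_tildeObs_general {n m s N : ℕ}
    (Atil : Matrix (Fin n) (Fin n) ℝ) (Ctil : Matrix (Fin m) (Fin n) ℝ)
    (Xtil : Matrix (Fin n) (Fin s) ℝ) (G : Matrix (Fin s) (Fin N × Fin m) ℝ)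
    (hG : (tildeObs Atil Ctil N * Xtil) * G * (tildeObs Atil Ctil N * Xtil) =
      tildeObs Atil Ctil N * Xtil)
    (hinj : ∀ z ∈ LinearMap.range Xtil.mulVecLin,
      (tildeObs Atil Ctil N).mulVec z = 0 → z = 0) :
    ∀ v ∈ LinearMap.range Xtil.mulVecLin,
      (blockCompanion (Ctil * Atil ^ N * Xtil * G)).mulVec
        ((tildeObs Atil Ctil N).mulVec v) =
      (tildeObs Atil Ctil N).mulVec (Atil.mulVec v) := by
  rintro v ⟨c, rfl⟩
  rw [mulVecLin_apply]
  apply blockCompanion_mulVec_tildeObs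
  have hXG : Xtil *ᵥ (G *ᵥ (tildeObs Atil Ctil N *ᵥ (Xtil *ᵥ c))) = Xtil *ᵥ c :=
    mulVec_mulVec_pinv_eq_of_injective hG (fun z hz => hinj _ ⟨z, rfl⟩ hz) c
  conv_rhs => rw [← hXG]
  simp only [mulVec_mulVec, Matrix.mul_assoc]

/-- With `M_u := C̃ Ã^N X̃ G` and `G` a (1st Moore–Penrose equation) pseudoinverse of
`Õ_{N-1} X̃`, if `Õ_{N-1}` is injective on the column space of `X̃`, then
`R (Õ_{N-1} v) = Õ_{N-1} (Ã v)` for every `v` in the column space of `X̃`. -/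
theorem blockCompanion_shifts_tildeObs {n m s N : ℕ} (hN : 1 ≤ N)
    (Atil : Matrix (Fin n) (Fin n) ℝ) (Ctil : Matrix (Fin m) (Fin n) ℝ)
    (Xtil : Matrix (Fin n) (Fin s) ℝ) (G : Matrix (Fin s) (Fin N × Fin m) ℝ)
    (hG : (tildeObs Atil Ctil N * Xtil) * G * (tildeObs Atil Ctil N * Xtil) =
      tildeObs Atil Ctil N * Xtil)
    (hinj : ∀ z ∈ LinearMap.range Xtil.mulVecLin,
      (tildeObs Atil Ctil N).mulVec z = 0 → z = 0) :
    ∀ v ∈ LinearMap.range Xtil.mulVecLin,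
      (blockCompanion (Ctil * Atil ^ N * Xtil * G)).mulVec
        ((tildeObs Atil Ctil N).mulVec v) =
      (tildeObs Atil Ctil N).mulVec (Atil.mulVec v) :=
  blockCompanion_shifts_tildeObs_general Atil Ctil Xtil G hG hinj
end

section
/- Let O ∈ ℝ^{q_y×n}, T ∈ ℝ^{q_y×q_u}, X ∈ ℝ^{n×s}, U ∈ ℝ^{q_u×s} be real matrices, and define Y := O X + T U ∈ ℝ^{q_y×s}. Assume the vertically stacked matrix [X; U] ∈ ℝ^{(n+q_u)×s} has full row rank n + q_u. Then {X w : w ∈ ℝ^s, Y w = 0} = {ξ ∈ ℝⁿ : there exists ū ∈ ℝ^{q_u} with O ξ + T ū = 0}. In particular, the column space of X (I − G Y), where G is any matrix with Y G Y = Y, equals the set on the right-hand side. -/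
/-!
Full row rank of `[X; U]` makes `w ↦ (X w, U w)` onto, so every pair `(ξ, ū)` with
`O ξ + T ū = 0` is realised as `(X w, U w)` by some `w` with `(O X + T U) w = 0`.
For a generalized inverse `G` of `Y`, the columns of `I - G Y` span exactly `ker Y`.
-/

open Matrix

section Rank

variable {K : Type*} [Field K] {l m n : Type*} [Fintype l] [Fintype m] [Fintype n]

theorem Matrix.mulVec_surjective_of_rank_eq_card (A : Matrix m n K)
    (hA : A.rank = Fintype.card m) : Function.Surjective A.mulVec := by
  have hrange : LinearMap.range A.mulVecLin = ⊤ :=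
    Submodule.eq_top_of_finrank_eq (by rw [← Matrix.rank, hA, Module.finrank_fintype_fun_eq_card])
  exact LinearMap.range_eq_top.mp hrange

theorem Matrix.exists_mulVec_eq_of_rank_fromRows {A : Matrix l n K} {B : Matrix m n K}
    (hAB : (fromRows A B).rank = Fintype.card l + Fintype.card m) (x : l → K) (y : m → K) :
    ∃ w, A *ᵥ w = x ∧ B *ᵥ w = y := by
  obtain ⟨w, hw⟩ := (fromRows A B).mulVec_surjective_of_rank_eq_card
    (by rwa [Fintype.card_sum]) (Sum.elim x y)
  rw [fromRows_mulVec] at hw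
  exact ⟨w, Sum.elim_eq_iff.mp hw⟩

end Rank

section Kernel

variable {R : Type*} [Ring R] {l m n p : Type*} [Fintype n]

theorem Matrix.image_ker_add_mul_eq [Fintype l] [Fintype m] {O : Matrix p l R}
    {T : Matrix p m R} {X : Matrix l n R} {U : Matrix m n R}
    (hXU : ∀ x y, ∃ w, X *ᵥ w = x ∧ U *ᵥ w = y) :
    {ξ | ∃ w, (O * X + T * U) *ᵥ w = 0 ∧ ξ = X *ᵥ w} =
      {ξ | ∃ u, O *ᵥ ξ + T *ᵥ u = 0} := by
  ext ξ
  constructor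
  · rintro ⟨w, hw, rfl⟩
    exact ⟨U *ᵥ w, by rwa [add_mulVec, ← mulVec_mulVec, ← mulVec_mulVec] at hw⟩
  · rintro ⟨u, hu⟩
    obtain ⟨w, hX, hU⟩ := hXU ξ u
    exact ⟨w, by rwa [add_mulVec, ← mulVec_mulVec, ← mulVec_mulVec, hX, hU], hX.symm⟩

theorem Matrix.exists_eq_one_sub_mul_mulVec_iff [DecidableEq n] [Fintype p] {Y : Matrix p n R}
    {G : Matrix n p R} (hG : Y * G * Y = Y) (v : n → R) :
    (∃ w, v = (1 - G * Y) *ᵥ w) ↔ Y *ᵥ v = 0 := by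
  constructor
  · rintro ⟨w, rfl⟩
    rw [mulVec_mulVec, Matrix.mul_sub, Matrix.mul_one, ← Matrix.mul_assoc, hG, sub_self,
      zero_mulVec]
  · intro hv
    exact ⟨v, by rw [sub_mulVec, one_mulVec, ← mulVec_mulVec, hv, mulVec_zero, sub_zero]⟩

theorem Matrix.range_mul_one_sub_mul_eq_image_ker [DecidableEq n] [Fintype p]
    {X : Matrix l n R} {Y : Matrix p n R} {G : Matrix n p R} (hG : Y * G * Y = Y) :
    {ξ | ∃ w, ξ = (X * (1 - G * Y)) *ᵥ w} = {ξ | ∃ w, Y *ᵥ w = 0 ∧ ξ = X *ᵥ w} := by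
  ext ξ
  simp only [Set.mem_ofPred_eq, ← mulVec_mulVec]
  constructor
  · rintro ⟨w, rfl⟩
    exact ⟨_, (exists_eq_one_sub_mul_mulVec_iff hG _).mp ⟨w, rfl⟩, rfl⟩
  · rintro ⟨w, hw, rfl⟩
    obtain ⟨v, hv⟩ := (exists_eq_one_sub_mul_mulVec_iff hG w).mpr hw
    exact ⟨v, by rw [← hv]⟩

end Kernel

/-- If `Y = O X + T U` and the stacked matrix `[X; U]` has full row rank `n + q_u`, then
`{X w : Y w = 0}` equals the finite-horizon output-nulling set
`{ξ : ∃ ū, O ξ + T ū = 0}`; in particular, for any `G` with `Y G Y = Y`, the column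
space of `X (I - G Y)` equals that set. -/
theorem image_ker_eq_output_nulling {qy qu n s : ℕ}
    (O : Matrix (Fin qy) (Fin n) ℝ) (T : Matrix (Fin qy) (Fin qu) ℝ)
    (X : Matrix (Fin n) (Fin s) ℝ) (U : Matrix (Fin qu) (Fin s) ℝ)
    (hrank : (Matrix.fromRows X U).rank = n + qu) :
    ({ξ : Fin n → ℝ | ∃ w : Fin s → ℝ, (O * X + T * U).mulVec w = 0 ∧ ξ = X.mulVec w} =
      {ξ : Fin n → ℝ | ∃ ubar : Fin qu → ℝ, O.mulVec ξ + T.mulVec ubar = 0}) ∧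
    (∀ G : Matrix (Fin s) (Fin qy) ℝ,
      (O * X + T * U) * G * (O * X + T * U) = O * X + T * U →
      {ξ : Fin n → ℝ | ∃ w : Fin s → ℝ, ξ = (X * (1 - G * (O * X + T * U))).mulVec w} =
        {ξ : Fin n → ℝ | ∃ ubar : Fin qu → ℝ, O.mulVec ξ + T.mulVec ubar = 0}) := by
  have hXU := X.exists_mulVec_eq_of_rank_fromRows (B := U) (by simpa using hrank)
  exact ⟨image_ker_add_mul_eq hXU, fun G hG => by
    rw [range_mul_one_sub_mul_eq_image_ker hG, image_ker_add_mul_eq hXU]⟩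
end

section
/- Let S ∈ ℂ^{d×d} with operator 2-norm ‖S‖₂ ≤ 1, and let Q ∈ ℂ^{d×t} have orthonormal columns (Qᴴ Q = I_t). If λ ∈ ℂ with |λ| = 1 is an eigenvalue of Qᴴ S Q, then λ is an eigenvalue of S; indeed, for any eigenvector v of Qᴴ S Q with eigenvalue λ, S (Q v) = λ (Q v). -/
open Matrix
open scoped Matrix.Norms.L2Operator

/-! With `w = Q v` we have `‖w‖ = ‖v‖` and `⟪w, S w⟫ = ⟪v, Qᴴ S Q v⟫ = λ ‖w‖²`, while `‖S w‖ ≤ ‖w‖`.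
Since `|λ| = 1`, expanding gives `‖S w - λ w‖² = ‖S w‖² - ‖w‖² ≤ 0`: the equality case of
Cauchy–Schwarz forces `S w = λ w`. -/

open RCLike in
theorem eq_smul_of_norm_le_of_inner_eq_mul_inner_self {𝕜 E : Type*} [RCLike 𝕜]
    [NormedAddCommGroup E] [InnerProductSpace 𝕜 E] {x y : E} {c : 𝕜} (hc : ‖c‖ = 1)
    (hy : ‖y‖ ≤ ‖x‖) (hxy : inner 𝕜 x y = c * inner 𝕜 x x) : y = c • x := by
  have hyx : re (inner 𝕜 y (c • x)) = ‖x‖ ^ 2 := by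
    rw [inner_smul_right, ← inner_conj_symm, hxy, map_mul (starRingEnd 𝕜), ← mul_assoc,
      mul_conj, hc, inner_self_conj]
    simp
  have hsq : ‖y - c • x‖ ^ 2 = ‖y‖ ^ 2 - ‖x‖ ^ 2 := by
    rw [@norm_sub_sq 𝕜, hyx, norm_smul, hc, one_mul]
    ring
  have hzero : ‖y - c • x‖ = 0 := by
    nlinarith [norm_nonneg y, norm_nonneg (y - c • x)]
  exact sub_eq_zero.mp (norm_eq_zero.mp hzero)

theorem Matrix.mulVec_eq_smul_of_l2_opNorm_le_one {𝕜 n : Type*} [RCLike 𝕜] [Fintype n]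
    [DecidableEq n] {S : Matrix n n 𝕜} (hS : ‖S‖ ≤ 1) {c : 𝕜} (hc : ‖c‖ = 1) {w : n → 𝕜}
    (hw : star w ⬝ᵥ S *ᵥ w = c * (star w ⬝ᵥ w)) : S *ᵥ w = c • w := by
  have hle : ‖WithLp.toLp 2 (S *ᵥ w)‖ ≤ ‖WithLp.toLp 2 w‖ :=
    (S.l2_opNorm_mulVec _).trans (mul_le_of_le_one_left (norm_nonneg _) hS)
  have hinner : inner 𝕜 (WithLp.toLp 2 w) (WithLp.toLp 2 (S *ᵥ w)) =
      c * inner 𝕜 (WithLp.toLp 2 w) (WithLp.toLp 2 w) := by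
    simpa only [EuclideanSpace.inner_toLp_toLp, dotProduct_comm _ (star w)] using hw
  simpa using congrArg WithLp.ofLp (eq_smul_of_norm_le_of_inner_eq_mul_inner_self hc hle hinner)

theorem Matrix.star_mulVec_dotProduct_mulVec_mulVec {R m n : Type*} [CommSemiring R] [StarRing R]
    [Fintype m] [Fintype n]
    (Q : Matrix m n R) (S : Matrix m m R) (v : n → R) :
    star (Q *ᵥ v) ⬝ᵥ S *ᵥ Q *ᵥ v = star v ⬝ᵥ (Qᴴ * S * Q) *ᵥ v := by
  rw [star_mulVec, ← dotProduct_mulVec, mulVec_mulVec, mulVec_mulVec, Matrix.mul_assoc]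

theorem Matrix.mulVec_injective_of_mul_eq_one {R m n : Type*} [Semiring R] [Fintype m]
    [Fintype n] [DecidableEq n]
    {Q : Matrix m n R} {P : Matrix n m R} (h : P * Q = 1) : Function.Injective Q.mulVec := by
  intro v w hvw
  simpa [mulVec_mulVec, h] using congrArg (P *ᵥ ·) hvw

/-- If `‖S‖₂ ≤ 1` (operator 2-norm), `Q` has orthonormal columns, and `λ` with `|λ| = 1`
is an eigenvalue of `Qᴴ S Q`, then `λ` is an eigenvalue of `S`; indeed every eigenvector
`v` of `Qᴴ S Q` for `λ` satisfies `S (Q v) = λ (Q v)`. -/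
theorem unimodular_eigenvalue_of_compression {d t : ℕ}
    (S : Matrix (Fin d) (Fin d) ℂ) (hS : ‖S‖ ≤ 1)
    (Q : Matrix (Fin d) (Fin t) ℂ) (hQ : Qᴴ * Q = 1)
    (lam : ℂ) (hlam : ‖lam‖ = 1) :
    (∀ v : Fin t → ℂ, v ≠ 0 → (Qᴴ * S * Q).mulVec v = lam • v →
      S.mulVec (Q.mulVec v) = lam • Q.mulVec v) ∧
    ((∃ v : Fin t → ℂ, v ≠ 0 ∧ (Qᴴ * S * Q).mulVec v = lam • v) →
      ∃ w : Fin d → ℂ, w ≠ 0 ∧ S.mulVec w = lam • w) := by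
  have hlift_eigenvector (v : Fin t → ℂ) (hv : (Qᴴ * S * Q) *ᵥ v = lam • v) :
      S *ᵥ Q *ᵥ v = lam • Q *ᵥ v := by
    refine mulVec_eq_smul_of_l2_opNorm_le_one hS hlam ?_
    have hisometry : star (Q *ᵥ v) ⬝ᵥ Q *ᵥ v = star v ⬝ᵥ v := by
      simpa [hQ] using Q.star_mulVec_dotProduct_mulVec_mulVec 1 v
    rw [star_mulVec_dotProduct_mulVec_mulVec, hv, dotProduct_smul, smul_eq_mul, hisometry]
  refine ⟨fun v _ hv => hlift_eigenvector v hv,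
    fun ⟨v, hv0, hv⟩ => ⟨Q *ᵥ v, ?_, hlift_eigenvector v hv⟩⟩
  exact (mulVec_injective_of_mul_eq_one hQ).ne_iff' (mulVec_zero Q) |>.mpr hv0
end

section
/- Let N ≥ 1, m ≥ 1, and let S̃ ∈ ℝ^{Nm×Nm} be the block upward-shift matrix with I_m in blocks (i, i+1) for i = 1,…,N−1 and zeros elsewhere. Let M_u ∈ ℝ^{m×Nm} and R := S̃ + (e_N ⊗ I_m) M_u, where e_N is the N-th standard basis vector of ℝ^N. Suppose there exist J ∈ ℝ^{Nm×r} with full column rank and A_z ∈ ℝ^{r×r} such that R J = J A_z, and suppose M_u (I − J G_J) = 0 for a Moore–Penrose pseudoinverse G_J of J. Then the complex spectrum of A_z is contained in the complex spectrum of R, and the spectral radius of R is strictly less than 1 if and only if the spectral radius of A_z is strictly less than 1. -/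
open Matrix

/-- Block upward-shift matrix `S̃ ∈ ℝ^{Nm×Nm}`: identity blocks `(i, i+1)`, zeros else. -/
noncomputable def blockShift (N m : ℕ) : Matrix (Fin N × Fin m) (Fin N × Fin m) ℝ :=
  fun ir jc => if (jc.1 : ℕ) = (ir.1 : ℕ) + 1 ∧ ir.2 = jc.2 then 1 else 0

/-- The Kronecker product `e_N ⊗ I_m ∈ ℝ^{Nm×m}` (`e_N` the `N`-th standard basis
vector of `ℝ^N`). -/
noncomputable def eNkronId (N m : ℕ) : Matrix (Fin N × Fin m) (Fin m) ℝ :=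
  fun ir c => if (ir.1 : ℕ) + 1 = N ∧ ir.2 = c then 1 else 0

/-- `G` is a Moore–Penrose pseudoinverse of `K`. -/
def IsMoorePenrose {a b : Type*} [Fintype a] [Fintype b] (K : Matrix a b ℝ)
    (G : Matrix b a ℝ) : Prop :=
  K * G * K = K ∧ G * K * G = G ∧ (K * G)ᵀ = K * G ∧ (G * K)ᵀ = G * K

/-!
With `P = J G_J`, the orthogonal projection onto the column space of `J`, we have `G_J J = 1`,
so `J` carries eigenvectors of `A_z` to eigenvectors of `R`. Conversely, the column space of `J`
is `R`-invariant and `M_u` vanishes on its orthogonal complement, so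
`(1 - P) R = (1 - P) S̃ (1 - P)`: an eigenvector of `R` either lies in the column space of `J`,
and then yields an eigenvector of `A_z`, or its image under `1 - P` is an eigenvector of
`(1 - P) S̃` for the same eigenvalue `μ`. In the latter case `|μ| < 1`, because `S̃` is a
nilpotent contraction: if `(1 - P) S̃ w = μ w` with `|μ| ≥ 1`, Pythagoras forces `P S̃ w = 0`,
so `w` is an eigenvector of `S̃` with nonzero eigenvalue, which is impossible.
-/

namespace Matrix

variable {l m n k : Type*}

section Complexification

theorem map_ofReal_mul [Fintype m] (A : Matrix l m ℝ) (B : Matrix m n ℝ) :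
    (A * B).map Complex.ofReal = A.map Complex.ofReal * B.map Complex.ofReal :=
  Matrix.map_mul (f := Complex.ofRealHom)

theorem map_ofReal_sub (A B : Matrix l m ℝ) :
    (A - B).map Complex.ofReal = A.map Complex.ofReal - B.map Complex.ofReal :=
  Matrix.map_sub _ Complex.ofReal_sub A B

theorem map_ofReal_one [DecidableEq n] : (1 : Matrix n n ℝ).map Complex.ofReal = 1 :=
  Matrix.map_one _ Complex.ofReal_zero Complex.ofReal_one

theorem _root_.IsStarProjection.map_ofReal [Fintype n] [DecidableEq n] {P : Matrix n n ℝ}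
    (hP : IsStarProjection P) : IsStarProjection (P.map Complex.ofReal) where
  isIdempotentElem := hP.isIdempotentElem.map Complex.ofRealHom.mapMatrix
  isSelfAdjoint := IsHermitian.map hP.isSelfAdjoint _ fun x => (Complex.conj_ofReal x).symm

end Complexification

variable [Fintype n] [Fintype k]

theorem one_sub_mul_eq_mul_one_sub [DecidableEq n] {α : Type*} [Ring α] {R S : Matrix n n α}
    {J : Matrix n k α} {G : Matrix k n α} {A : Matrix k k α} (hJGJ : J * G * J = J)
    (hRJ : R * J = J * A) (hRS : R * (1 - J * G) = S * (1 - J * G)) :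
    (1 - J * G) * R = (1 - J * G) * S * (1 - J * G) := by
  have hPJ : (1 - J * G) * J = 0 := by rw [Matrix.sub_mul, Matrix.one_mul, hJGJ, sub_self]
  calc (1 - J * G) * R = (1 - J * G) * (R * J) * G + (1 - J * G) * (R * (1 - J * G)) := by
        simp only [Matrix.mul_sub, Matrix.mul_one, Matrix.mul_assoc, add_sub_cancel]
    _ = (1 - J * G) * S * (1 - J * G) := by
        rw [hRJ, hRS, ← Matrix.mul_assoc _ J, hPJ, Matrix.zero_mul, Matrix.zero_mul, zero_add,
          Matrix.mul_assoc]

section Field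

variable {K : Type*} [Field K]

theorem mem_spectrum_iff_exists_mulVec_eq_smul [DecidableEq n] (A : Matrix n n K) (μ : K) :
    μ ∈ spectrum K A ↔ ∃ v ≠ 0, A *ᵥ v = μ • v := by
  rw [← spectrum_toLin', ← Module.End.hasEigenvalue_iff_mem_spectrum,
    Module.End.hasEigenvalue_iff, Submodule.ne_bot_iff]
  simp [and_comm]

theorem mul_eq_one_of_rank_eq_card [DecidableEq k] {J : Matrix n k K} {G : Matrix k n K}
    (hJ : J.rank = Fintype.card k) (hJGJ : J * G * J = J) : G * J = 1 := by
  have hinj : Function.Injective J.mulVec := mulVec_injective_iff.mpr <|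
    linearIndependent_iff_card_eq_finrank_span.mpr (hJ.symm.trans J.rank_eq_finrank_span_cols)
  refine mulVec_injective (funext fun v => hinj ?_)
  rw [one_mulVec, mulVec_mulVec, ← Matrix.mul_assoc, hJGJ]

variable [DecidableEq n] [DecidableEq k] {R T : Matrix n n K} {J : Matrix n k K} {G : Matrix k n K}
  {A : Matrix k k K}

theorem spectrum_subset_of_mul_eq_mul (hGJ : G * J = 1) (hRJ : R * J = J * A) :
    spectrum K A ⊆ spectrum K R := by
  intro μ hμ
  obtain ⟨v, hv, hAv⟩ := (mem_spectrum_iff_exists_mulVec_eq_smul A μ).mp hμ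
  refine (mem_spectrum_iff_exists_mulVec_eq_smul R μ).mpr ⟨J *ᵥ v, fun h => hv ?_, ?_⟩
  · simpa [mulVec_mulVec, hGJ] using congrArg (G *ᵥ ·) h
  · rw [mulVec_mulVec, hRJ, ← mulVec_mulVec, hAv, mulVec_smul]

theorem spectrum_subset_union_of_mul_eq_mul (hGJ : G * J = 1) (hRJ : R * J = J * A)
    (hT : (1 - J * G) * R = T * (1 - J * G)) :
    spectrum K R ⊆ spectrum K A ∪ spectrum K T := by
  intro μ hμ
  obtain ⟨x, hx, hRx⟩ := (mem_spectrum_iff_exists_mulVec_eq_smul R μ).mp hμ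
  by_cases hw : (1 - J * G) *ᵥ x = 0
  · left
    have hJGx : J *ᵥ (G *ᵥ x) = x := by
      rw [sub_mulVec, one_mulVec, sub_eq_zero] at hw
      rw [mulVec_mulVec, ← hw]
    refine (mem_spectrum_iff_exists_mulVec_eq_smul A μ).mpr ⟨G *ᵥ x, fun h => hx ?_, ?_⟩
    · rw [← hJGx, h, mulVec_zero]
    · calc A *ᵥ (G *ᵥ x) = (G * (R * J)) *ᵥ (G *ᵥ x) := by
            rw [hRJ, ← Matrix.mul_assoc, hGJ, Matrix.one_mul]
        _ = G *ᵥ (R *ᵥ (J *ᵥ (G *ᵥ x))) := by simp only [mulVec_mulVec, Matrix.mul_assoc]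
        _ = μ • (G *ᵥ x) := by rw [hJGx, hRx, mulVec_smul]
  · right
    refine (mem_spectrum_iff_exists_mulVec_eq_smul T μ).mpr ⟨_, hw, ?_⟩
    rw [mulVec_mulVec, ← hT, ← mulVec_mulVec, hRx, mulVec_smul]

end Field

end Matrix

theorem IsMoorePenrose.isStarProjection_mul {a b : Type*} [Fintype a] [Fintype b]
    {J : Matrix a b ℝ} {G : Matrix b a ℝ} (h : IsMoorePenrose J G) : IsStarProjection (J * G) where
  isIdempotentElem := by rw [IsIdempotentElem, ← Matrix.mul_assoc, h.1]
  isSelfAdjoint := (conjTranspose_eq_transpose_of_trivial _).trans h.2.2.1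

section Contraction

variable {𝕜 E : Type*} [RCLike 𝕜] [NormedAddCommGroup E] [InnerProductSpace 𝕜 E] [CompleteSpace E]

theorem eq_zero_of_one_sub_starProjection_apply_eq_smul {S p : E →L[𝕜] E} (hS : IsNilpotent S)
    (hS₁ : ∀ x, ‖S x‖ ≤ ‖x‖) (hp : IsStarProjection p) {μ : 𝕜} (hμ : 1 ≤ ‖μ‖) {w : E}
    (hw : (1 - p) (S w) = μ • w) : w = 0 := by
  obtain ⟨K, _, rfl⟩ := isStarProjection_iff_eq_starProjection.mp hp
  have hpyth := K.norm_sq_eq_add_norm_sq_starProjection (S w)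
  rw [K.starProjection_orthogonal', hw, norm_smul] at hpyth
  have hKSw : K.starProjection (S w) = 0 := by
    have hSw_le := hS₁ w
    have : ‖w‖ ≤ ‖μ‖ * ‖w‖ := le_mul_of_one_le_left (norm_nonneg w) hμ
    refine norm_eq_zero.mp (pow_eq_zero_iff two_ne_zero |>.mp ?_)
    nlinarith [norm_nonneg (S w), norm_nonneg w, norm_nonneg (K.starProjection (S w))]
  have hSw : S w = μ • w := by simpa [hKSw] using hw
  by_contra hw₀
  have hμ₀ : μ ≠ 0 := norm_pos_iff.mp (one_pos.trans_le hμ)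
  refine hμ₀ (IsNilpotent.eq_zero ?_)
  exact (Module.End.hasEigenvalue_of_hasEigenvector ⟨Module.End.mem_eigenspace_iff.mpr hSw, hw₀⟩
    ).isNilpotent_of_isNilpotent (hS.map ContinuousLinearMap.toLinearMapRingHom)

theorem Matrix.norm_lt_one_of_mem_spectrum_one_sub_mul {ι : Type*} [Fintype ι] [DecidableEq ι]
    {S P : Matrix ι ι 𝕜} (hS : IsNilpotent S) (hS₁ : ∀ x, ‖toEuclideanCLM (𝕜 := 𝕜) S x‖ ≤ ‖x‖)
    (hP : IsStarProjection P) {μ : 𝕜} (hμ : μ ∈ spectrum 𝕜 ((1 - P) * S)) : ‖μ‖ < 1 := by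
  obtain ⟨v, hv, hSv⟩ := (mem_spectrum_iff_exists_mulVec_eq_smul _ μ).mp hμ
  by_contra! hμ₁
  have hv₀ : WithLp.toLp 2 v = 0 := by
    refine eq_zero_of_one_sub_starProjection_apply_eq_smul (hS.map toEuclideanCLM) hS₁
      (hP.map (toEuclideanCLM (n := ι) (𝕜 := 𝕜))) hμ₁ ?_
    rw [← map_one (toEuclideanCLM (n := ι) (𝕜 := 𝕜)), ← map_sub, toEuclideanCLM_toLp,
      toEuclideanCLM_toLp, mulVec_mulVec, hSv, WithLp.toLp_smul]
  exact hv (by simpa using hv₀)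

end Contraction

theorem blockShift_map_mulVec_apply {N m : ℕ} (v : Fin N × Fin m → ℂ) (i : Fin N) (c : Fin m) :
    ((blockShift N m).map Complex.ofReal *ᵥ v) (i, c) =
      if h : (i : ℕ) + 1 < N then v (⟨i + 1, h⟩, c) else 0 := by
  simp only [mulVec, dotProduct, map_apply, blockShift]
  split_ifs with h
  · rw [Finset.sum_eq_single (⟨⟨i + 1, h⟩, c⟩ : Fin N × Fin m)]
    · simp
    · rintro ⟨j, d⟩ - hne
      have : ¬((j : ℕ) = i + 1 ∧ c = d) := fun ⟨hj, hd⟩ => hne (by subst hd; ext <;> simp [hj])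
      simp [this]
    · simp
  · refine Finset.sum_eq_zero fun p _ => ?_
    have : ¬((p.1 : ℕ) = i + 1 ∧ c = p.2) := fun hp => h (hp.1 ▸ p.1.isLt)
    simp [this]

theorem blockShift_map_pow_mulVec_apply {N m : ℕ} (k : ℕ) (v : Fin N × Fin m → ℂ) (i : Fin N)
    (c : Fin m) :
    ((blockShift N m).map Complex.ofReal ^ k *ᵥ v) (i, c) =
      if h : (i : ℕ) + k < N then v (⟨i + k, h⟩, c) else 0 := by
  induction k generalizing i with
  | zero => simp
  | succ k ih =>
    rw [pow_succ', ← mulVec_mulVec, blockShift_map_mulVec_apply]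
    split_ifs with h₁ h₂ h₂
    · simp [ih, add_assoc, add_comm 1 k, h₂]
    · rw [ih, dif_neg (by simp; omega)]
    · omega
    · rfl

theorem isNilpotent_blockShift_map (N m : ℕ) :
    IsNilpotent ((blockShift N m).map Complex.ofReal) :=
  ⟨N, mulVec_injective <| funext fun v => funext fun ⟨i, c⟩ => by
    simp [blockShift_map_pow_mulVec_apply]⟩

theorem norm_toEuclideanCLM_blockShift_map_apply_le {N m : ℕ}
    (x : EuclideanSpace ℂ (Fin N × Fin m)) :
    ‖toEuclideanCLM (𝕜 := ℂ) ((blockShift N m).map Complex.ofReal) x‖ ≤ ‖x‖ := by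
  obtain _ | n := N
  · simp [Subsingleton.elim x 0]
  refine sq_le_sq₀ (norm_nonneg _) (norm_nonneg _) |>.mp ?_
  calc _ = ∑ j : Fin n, ∑ c, ‖x (j.succ, c)‖ ^ 2 := by
        simp only [EuclideanSpace.norm_sq_eq, ofLp_toEuclideanCLM, Fintype.sum_prod_type,
          blockShift_map_mulVec_apply, Order.lt_add_one_iff, Order.add_one_le_iff,
          Fin.sum_univ_castSucc, Fin.val_castSucc, Fin.is_lt, ↓reduceDIte, Fin.val_last,
          lt_self_iff_false, norm_zero, ne_eq, OfNat.ofNat_ne_zero, not_false_eq_true, zero_pow,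
          Finset.sum_const_zero, add_zero]
        rfl
    _ ≤ ∑ c, ‖x (0, c)‖ ^ 2 + ∑ j : Fin n, ∑ c, ‖x (j.succ, c)‖ ^ 2 :=
        le_add_of_nonneg_left (by positivity)
    _ = ‖x‖ ^ 2 := by
        rw [EuclideanSpace.norm_sq_eq, Fintype.sum_prod_type, Fin.sum_univ_succ]

theorem R_spectrum_characterization_general {N m r : ℕ}
    (Mu : Matrix (Fin m) (Fin N × Fin m) ℝ)
    (J : Matrix (Fin N × Fin m) (Fin r) ℝ) (hJ : J.rank = r)
    (Az : Matrix (Fin r) (Fin r) ℝ)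
    (hRJ : (blockShift N m + eNkronId N m * Mu) * J = J * Az)
    (GJ : Matrix (Fin r) (Fin N × Fin m) ℝ) (hGJ : IsMoorePenrose J GJ)
    (hMu : Mu * (1 - J * GJ) = 0) :
    spectrum ℂ (Az.map Complex.ofReal) ⊆
      spectrum ℂ (((blockShift N m + eNkronId N m * Mu)).map Complex.ofReal) ∧
    ((∀ z ∈ spectrum ℂ (((blockShift N m + eNkronId N m * Mu)).map Complex.ofReal),
        ‖z‖ < 1) ↔
      (∀ z ∈ spectrum ℂ (Az.map Complex.ofReal), ‖z‖ < 1)) := by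
  have hGJ₁ : GJ * J = 1 := mul_eq_one_of_rank_eq_card (by rwa [Fintype.card_fin]) hGJ.1
  have hT := one_sub_mul_eq_mul_one_sub (S := blockShift N m) hGJ.1 hRJ <| by
    rw [Matrix.add_mul, Matrix.mul_assoc, hMu, Matrix.mul_zero, add_zero]
  have hGJc := congrArg (map · Complex.ofReal) hGJ₁
  have hRJc := congrArg (map · Complex.ofReal) hRJ
  have hTc := congrArg (map · Complex.ofReal) hT
  simp only [map_ofReal_mul, map_ofReal_sub, map_ofReal_one] at hGJc hRJc hTc
  have hAR := spectrum_subset_of_mul_eq_mul hGJc hRJc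
  refine ⟨hAR, fun h z hz => h z (hAR hz), fun h z hz => ?_⟩
  rcases spectrum_subset_union_of_mul_eq_mul hGJc hRJc hTc hz with hzA | hzT
  · exact h z hzA
  · have hP := hGJ.isStarProjection_mul.map_ofReal
    rw [map_ofReal_mul] at hP
    exact norm_lt_one_of_mem_spectrum_one_sub_mul (isNilpotent_blockShift_map N m)
      norm_toEuclideanCLM_blockShift_map_apply_le hP hzT

/-- If `R := S̃ + (e_N ⊗ I_m) M_u` satisfies `R J = J A_z` with `J` of full column rank
and `M_u (I - J G_J) = 0`, then `spec A_z ⊆ spec R`, and `R` has spectral radius `< 1`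
iff `A_z` does. -/
theorem R_spectrum_characterization {N m r : ℕ} (hN : 1 ≤ N) (hm : 1 ≤ m)
    (Mu : Matrix (Fin m) (Fin N × Fin m) ℝ)
    (J : Matrix (Fin N × Fin m) (Fin r) ℝ) (hJ : J.rank = r)
    (Az : Matrix (Fin r) (Fin r) ℝ)
    (hRJ : (blockShift N m + eNkronId N m * Mu) * J = J * Az)
    (GJ : Matrix (Fin r) (Fin N × Fin m) ℝ) (hGJ : IsMoorePenrose J GJ)
    (hMu : Mu * (1 - J * GJ) = 0) :
    spectrum ℂ (Az.map Complex.ofReal) ⊆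
      spectrum ℂ (((blockShift N m + eNkronId N m * Mu)).map Complex.ofReal) ∧
    ((∀ z ∈ spectrum ℂ (((blockShift N m + eNkronId N m * Mu)).map Complex.ofReal),
        ‖z‖ < 1) ↔
      (∀ z ∈ spectrum ℂ (Az.map Complex.ofReal), ‖z‖ < 1)) :=
  R_spectrum_characterization_general Mu J hJ Az hRJ GJ hGJ hMu
end

section
/- Let P ∈ ℝ^{m×(L+1)p} satisfy P · I_L = [I_m, 0], and define Ã := A − B P O_L. Suppose λ ∈ ℂ, ξ ∈ ℂⁿ, μ ∈ ℂ^m with (ξ, μ) ≠ (0,0) satisfy (A − λI) ξ + B μ = 0 and C ξ + D μ = 0 (i.e., λ is an invariant zero with state-input direction (ξ, μ)). Then ξ ≠ 0, μ = −P O_L ξ, and Ã ξ = λ ξ; in particular, every invariant zero of the system is an eigenvalue of Ã. -/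
/-!
If `(A - λI)ξ + Bμ = 0` and `Cξ + Dμ = 0`, then `x_k = λ^k ξ`, `u_k = λ^k μ` is a trajectory of
the system with identically zero output. Stacking its first `L + 1` outputs gives
`O_L ξ + I_L (u_0, …, u_L) = 0`, and since `P I_L = [I_m, 0]`, applying `P` gives `P O_L ξ = -u_0 = -μ`.
So `μ` is determined by `ξ`, which forces `ξ ≠ 0`, and `Ãξ = Aξ + Bμ = λξ`.
-/

open Matrix

open Finset

theorem Matrix.trajectory_eq_pow_mulVec_add_sum {R ι κ : Type*} [Semiring R] [Fintype ι]
    [DecidableEq ι] [Fintype κ] {A : Matrix ι ι R} {B : Matrix ι κ R} {x : ℕ → ι → R}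
    {u : ℕ → κ → R} (hx : ∀ k, x (k + 1) = A *ᵥ x k + B *ᵥ u k) (k : ℕ) :
    x k = A ^ k *ᵥ x 0 + ∑ i ∈ range k, (A ^ (k - i - 1) * B) *ᵥ u i := by
  induction k with
  | zero => simp
  | succ k ih =>
    have hshift : ∀ i ∈ range k,
        A *ᵥ ((A ^ (k - i - 1) * B) *ᵥ u i) = (A ^ (k + 1 - i - 1) * B) *ᵥ u i := by
      intro i hi
      have hexp : k - i - 1 + 1 = k + 1 - i - 1 := by
        have := mem_range.mp hi
        omega
      rw [mulVec_mulVec, ← Matrix.mul_assoc, ← pow_succ', hexp]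
    rw [hx, ih, mulVec_add, mulVec_mulVec, ← pow_succ', mulVec_sum, sum_congr rfl hshift,
      sum_range_succ, show k + 1 - k - 1 = 0 by omega, pow_zero, Matrix.one_mul, add_assoc]

section StackedOutput

variable {n m p L : ℕ} (A : Matrix (Fin n) (Fin n) ℝ) (B : Matrix (Fin n) (Fin m) ℝ)
  (C : Matrix (Fin p) (Fin n) ℝ) (D : Matrix (Fin p) (Fin m) ℝ) {R : Type*} [CommRing R]
  (f : ℝ →+* R)

theorem obsMat_map_mulVec_apply (x : Fin n → R) (k : Fin (L + 1)) (r : Fin p) :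
    ((obsMat A C L).map f *ᵥ x) (k, r) = ((C * A ^ (k : ℕ)).map f *ᵥ x) r :=
  rfl

theorem invMat_map_mulVec_apply (u : ℕ → Fin m → R) (k : Fin (L + 1)) (r : Fin p) :
    ((invMat A B C D L).map f *ᵥ fun ic => u ic.1 ic.2) (k, r) =
      (∑ i ∈ range k, (C * A ^ (k - i - 1) * B).map f *ᵥ u i + D.map f *ᵥ u k) r := by
  set g : ℕ → R := fun i => if (k : ℕ) = i then (D.map f *ᵥ u k) r
    else if i < k then ((C * A ^ (k - i - 1) * B).map f *ᵥ u i) r else 0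
  have hblock (i : Fin (L + 1)) : ∑ c, (invMat A B C D L).map f (k, r) (i, c) * u i c = g i := by
    simp only [g, invMat, map_apply]
    split_ifs with hki <;> simp [mulVec, dotProduct, hki]
  calc ((invMat A B C D L).map f *ᵥ fun ic => u ic.1 ic.2) (k, r)
      = ∑ i : Fin (L + 1), g i := by
        simp only [mulVec, dotProduct, Fintype.sum_prod_type, hblock]
    _ = ∑ i ∈ range (L + 1), g i := Fin.sum_univ_eq_sum_range g _
    _ = ∑ i ∈ range (k + 1), g i := by
        refine (sum_subset (range_subset_range.mpr k.is_lt) fun i _ hi => ?_).symm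
        rw [mem_range] at hi
        simp only [g]
        rw [if_neg (by omega), if_neg (by omega)]
    _ = _ := by
        rw [sum_range_succ, Pi.add_apply, Finset.sum_apply]
        congr 1
        · refine sum_congr rfl fun i hi => ?_
          have hik := mem_range.mp hi
          simp only [g, if_neg hik.ne', if_pos hik]
        · simp only [g, if_pos rfl]

theorem obsMat_mulVec_add_invMat_mulVec {x : ℕ → Fin n → R} {u : ℕ → Fin m → R}
    (hx : ∀ k, x (k + 1) = A.map f *ᵥ x k + B.map f *ᵥ u k) :
    (obsMat A C L).map f *ᵥ x 0 + (invMat A B C D L).map f *ᵥ (fun ic => u ic.1 ic.2) =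
      fun kr => (C.map f *ᵥ x kr.1 + D.map f *ᵥ u kr.1) kr.2 := by
  ext ⟨k, r⟩
  rw [Pi.add_apply, obsMat_map_mulVec_apply, invMat_map_mulVec_apply,
    Matrix.trajectory_eq_pow_mulVec_add_sum hx k]
  simp only [Matrix.map_mul, Matrix.map_pow, mulVec_add, mulVec_sum, mulVec_mulVec,
    Matrix.mul_assoc, Pi.add_apply, add_assoc]

theorem idZero_map_mulVec (w : Fin (L + 1) × Fin m → R) :
    (idZero m L).map f *ᵥ w = fun r => w (0, r) := by
  ext r
  simp [mulVec, dotProduct, idZero, Fintype.sum_prod_type, ite_and, apply_ite f, ite_mul]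

end StackedOutput

theorem map_sub_mul_mulVec_eq_smul {ι κ R : Type*} [Fintype ι] [Fintype κ] [CommRing R]
    (f : ℝ →+* R) {A : Matrix ι ι ℝ} {B : Matrix ι κ ℝ} {K : Matrix κ ι ℝ} {lam : R}
    {ξ : ι → R} {μ : κ → R}
    (hAB : A.map f *ᵥ ξ + B.map f *ᵥ μ = lam • ξ) (hK : K.map f *ᵥ ξ = -μ) :
    (A - B * K).map f *ᵥ ξ = lam • ξ := by
  rw [Matrix.map_sub _ (map_sub f), sub_mulVec, Matrix.map_mul, ← mulVec_mulVec, hK, mulVec_neg,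
    sub_neg_eq_add, hAB]

theorem map_mul_obsMat_mulVec_eq_neg {n m p L : ℕ} {R : Type*} [CommRing R] (f : ℝ →+* R)
    {A : Matrix (Fin n) (Fin n) ℝ} {B : Matrix (Fin n) (Fin m) ℝ} {C : Matrix (Fin p) (Fin n) ℝ}
    {D : Matrix (Fin p) (Fin m) ℝ} {P : Matrix (Fin m) (Fin (L + 1) × Fin p) ℝ} {lam : R}
    {ξ : Fin n → R} {μ : Fin m → R}
    (hP : P * invMat A B C D L = idZero m L)
    (hAB : A.map f *ᵥ ξ + B.map f *ᵥ μ = lam • ξ) (hCD : C.map f *ᵥ ξ + D.map f *ᵥ μ = 0) :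
    (P * obsMat A C L).map f *ᵥ ξ = -μ := by
  have htraj (k : ℕ) :
      lam ^ (k + 1) • ξ = A.map f *ᵥ (lam ^ k • ξ) + B.map f *ᵥ (lam ^ k • μ) := by
    rw [mulVec_smul, mulVec_smul, ← smul_add, hAB, pow_succ, mul_smul]
  have hstack := obsMat_mulVec_add_invMat_mulVec A B C D f (L := L)
    (x := fun k => lam ^ k • ξ) (u := fun k => lam ^ k • μ) htraj
  have hO : (obsMat A C L).map f *ᵥ ξ =
      -((invMat A B C D L).map f *ᵥ fun ic => lam ^ (ic.1 : ℕ) • μ ic.2) := by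
    rw [eq_neg_iff_add_eq_zero]
    simp only [pow_zero, one_smul, Pi.smul_apply, mulVec_smul, ← smul_add, hCD, smul_zero,
      Pi.zero_apply] at hstack
    exact hstack
  rw [Matrix.map_mul, ← mulVec_mulVec, hO, mulVec_neg, mulVec_mulVec, ← Matrix.map_mul, hP,
    idZero_map_mulVec]
  simp

/-- If `λ` is an invariant zero with state-input direction `(ξ, μ) ≠ (0,0)`, i.e.
`(A - λI) ξ + B μ = 0` and `C ξ + D μ = 0`, and `P I_L = [I_m, 0]`, then `ξ ≠ 0`,
`μ = -P O_L ξ`, and `Ã ξ = λ ξ` for `Ã := A - B P O_L`; so every invariant zero is an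
eigenvalue of `Ã`. -/
theorem invariant_zero_is_eigenvalue_of_tildeA {n m p L : ℕ}
    (A : Matrix (Fin n) (Fin n) ℝ) (B : Matrix (Fin n) (Fin m) ℝ)
    (C : Matrix (Fin p) (Fin n) ℝ) (D : Matrix (Fin p) (Fin m) ℝ)
    (P : Matrix (Fin m) (Fin (L + 1) × Fin p) ℝ)
    (hP : P * invMat A B C D L = idZero m L)
    (lam : ℂ) (ξ : Fin n → ℂ) (μ : Fin m → ℂ)
    (hne : ¬(ξ = 0 ∧ μ = 0))
    (h1 : (A.map Complex.ofReal - lam • 1).mulVec ξ + (B.map Complex.ofReal).mulVec μ = 0)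
    (h2 : (C.map Complex.ofReal).mulVec ξ + (D.map Complex.ofReal).mulVec μ = 0) :
    ξ ≠ 0 ∧
    μ = -((P * obsMat A C L).map Complex.ofReal).mulVec ξ ∧
    ((A - B * P * obsMat A C L).map Complex.ofReal).mulVec ξ = lam • ξ := by
  have hAB : A.map Complex.ofReal *ᵥ ξ + B.map Complex.ofReal *ᵥ μ = lam • ξ := by
    rwa [sub_mulVec, smul_mulVec, one_mulVec, sub_add_eq_add_sub, sub_eq_zero] at h1
  have hPO : (P * obsMat A C L).map Complex.ofReal *ᵥ ξ = -μ :=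
    map_mul_obsMat_mulVec_eq_neg Complex.ofRealHom hP hAB h2
  refine ⟨?_, by rw [hPO, neg_neg], ?_⟩
  · rintro rfl
    exact hne ⟨rfl, by simpa using hPO.symm⟩
  · rw [Matrix.mul_assoc]
    exact map_sub_mul_mulVec_eq_smul Complex.ofRealHom hAB hPO
end
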